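/- arXiv:0705.4094 — 4 statements merged into one kernel-verified Lean document; each statement's English description precedes it below -/
import Mathlib

section
/- Fix k ∈ ℕ with k ≥ 1 and a real number m with 0 < m < k. Let λ > 0 be the unique positive real with (∑_{j=0}^k j·λ^j)/(∑_{j=0}^k λ^j) = m, and let d_λ(j) = λ^j / ∑_{i=0}^k λ^i. Then d_λ is the unique distribution maximizing the entropy H(d) = -∑_{j : d(j) ≠ 0} d(j)·log(d(j)) over the set Δ^k_m of probability distributions on {0,…,k} with mean m: for every d ∈ Δ^k_m with d ≠ d_λ, we have H(d) < H(d_λ). -/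
/-!
Gibbs' inequality `∑ d log d ≥ ∑ d log q`, strict for `d ≠ q`, compares `d` with `q = d_λ`.
Since `log d_λ(j) = j log λ - log ∑ λ^i` is affine in `j`, the cross entropy `∑ d log d_λ`
depends only on the total mass and the mean of `d`, so it equals `∑ d_λ log d_λ` for
every `d ∈ Δ^k_m`.
-/

/-- The entropy `H(d) = -∑_{j : d j ≠ 0} d j * log (d j)` of a function on `{0,…,k}`. -/
noncomputable def entropy {k : ℕ} (d : Fin (k + 1) → ℝ) : ℝ :=
  -∑ j ∈ Finset.univ.filter (fun j => d j ≠ 0), d j * Real.log (d j)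

/-- `Δ^k_m`: the set of probability distributions on `{0,…,k}` with mean `m`. -/
def DeltaKM (k : ℕ) (m : ℝ) : Set (Fin (k + 1) → ℝ) :=
  {d | (∀ j, 0 ≤ d j) ∧ ∑ j, d j = 1 ∧ ∑ j : Fin (k + 1), ((j : ℕ) : ℝ) * d j = m}

/-- The truncated geometric distribution on `{0,…,k}` with parameter `λ`:
`d_λ(j) = λ^j / ∑_{i=0}^k λ^i`. -/
noncomputable def truncGeom (k : ℕ) (l : ℝ) : Fin (k + 1) → ℝ :=
  fun j => l ^ (j : ℕ) / ∑ i ∈ Finset.range (k + 1), l ^ i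

open Finset Real

lemma entropy_eq_neg_sum {k : ℕ} (d : Fin (k + 1) → ℝ) :
    entropy d = -∑ j, d j * log (d j) := by
  rw [entropy, sum_filter_of_ne]
  intro j _ h hj
  exact h (by simp [hj])

lemma sub_lt_mul_log_sub_mul_log {x y : ℝ} (hx : 0 ≤ x) (hy : 0 < y) (hxy : x ≠ y) :
    x - y < x * log x - x * log y := by
  rcases hx.eq_or_lt with rfl | hx
  · simpa using hy
  have hyx : y / x ≠ 1 := fun h => hxy ((div_eq_one_iff_eq hx.ne').mp h).symm
  have hlog := log_lt_sub_one_of_pos (div_pos hy hx) hyx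
  rw [log_div hy.ne' hx.ne'] at hlog
  have := mul_lt_mul_of_pos_left hlog hx
  rw [mul_sub, mul_sub, mul_div_cancel₀ _ hx.ne'] at this
  linarith

lemma sub_le_mul_log_sub_mul_log {x y : ℝ} (hx : 0 ≤ x) (hy : 0 < y) :
    x - y ≤ x * log x - x * log y := by
  rcases eq_or_ne x y with rfl | hxy
  · simp
  · exact (sub_lt_mul_log_sub_mul_log hx hy hxy).le

theorem sum_mul_log_lt_sum_mul_log {ι : Type*} [Fintype ι] {p q : ι → ℝ}
    (hp : ∀ i, 0 ≤ p i) (hq : ∀ i, 0 < q i) (hpq : ∑ i, p i = ∑ i, q i) (hne : p ≠ q) :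
    ∑ i, p i * log (q i) < ∑ i, p i * log (p i) := by
  obtain ⟨i₀, hi₀⟩ := Function.ne_iff.mp hne
  have hlt : ∑ i, (p i - q i) < ∑ i, (p i * log (p i) - p i * log (q i)) :=
    sum_lt_sum (fun i _ => sub_le_mul_log_sub_mul_log (hp i) (hq i))
      ⟨i₀, mem_univ _, sub_lt_mul_log_sub_mul_log (hp i₀) (hq i₀) hi₀⟩
  rw [sum_sub_distrib, sum_sub_distrib, hpq, sub_self] at hlt
  linarith

section truncGeom

variable {k : ℕ} {l : ℝ}

lemma sum_range_pow_pos (hl : 0 < l) : 0 < ∑ i ∈ range (k + 1), l ^ i :=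
  sum_pos (fun i _ => pow_pos hl i) nonempty_range_add_one

lemma truncGeom_pos (hl : 0 < l) (j : Fin (k + 1)) : 0 < truncGeom k l j :=
  div_pos (pow_pos hl _) (sum_range_pow_pos hl)

lemma sum_truncGeom (hl : 0 < l) : ∑ j, truncGeom k l j = 1 := by
  simp only [truncGeom]
  rw [← sum_div, Fin.sum_univ_eq_sum_range (l ^ ·), div_self (sum_range_pow_pos hl).ne']

lemma sum_mul_truncGeom :
    ∑ j : Fin (k + 1), ((j : ℕ) : ℝ) * truncGeom k l j =
      (∑ j ∈ range (k + 1), (j : ℝ) * l ^ j) / ∑ j ∈ range (k + 1), l ^ j := by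
  simp only [truncGeom, mul_div_assoc']
  rw [← sum_div, Fin.sum_univ_eq_sum_range (fun j => (j : ℝ) * l ^ j)]

lemma log_truncGeom (hl : 0 < l) (j : Fin (k + 1)) :
    log (truncGeom k l j) = (j : ℕ) * log l - log (∑ i ∈ range (k + 1), l ^ i) := by
  rw [truncGeom, log_div (pow_ne_zero _ hl.ne') (sum_range_pow_pos hl).ne', log_pow]

lemma sum_mul_log_truncGeom (hl : 0 < l) {e : Fin (k + 1) → ℝ} (he : ∑ j, e j = 1) :
    ∑ j, e j * log (truncGeom k l j) =
      (∑ j : Fin (k + 1), ((j : ℕ) : ℝ) * e j) * log l - log (∑ i ∈ range (k + 1), l ^ i) := by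
  have hterm : ∀ j, e j * log (truncGeom k l j) =
      (j : ℕ) * e j * log l - e j * log (∑ i ∈ range (k + 1), l ^ i) := fun j => by
    rw [log_truncGeom hl]; ring
  simp only [hterm, sum_sub_distrib, ← sum_mul, he, one_mul]

end truncGeom

theorem truncGeom_unique_entropy_max_general (k : ℕ) (m : ℝ)
    (l : ℝ) (hl : 0 < l)
    (hmean : (∑ j ∈ Finset.range (k + 1), (j : ℝ) * l ^ j) /
      (∑ j ∈ Finset.range (k + 1), l ^ j) = m) :
    ∀ d ∈ DeltaKM k m, d ≠ truncGeom k l → entropy d < entropy (truncGeom k l) := by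
  rintro d ⟨hd_nonneg, hd_sum, hd_mean⟩ hne
  rw [entropy_eq_neg_sum, entropy_eq_neg_sum, neg_lt_neg_iff]
  calc ∑ j, truncGeom k l j * log (truncGeom k l j)
      = ∑ j, d j * log (truncGeom k l j) := by
        rw [sum_mul_log_truncGeom hl (sum_truncGeom hl), sum_mul_log_truncGeom hl hd_sum,
          sum_mul_truncGeom, hmean, hd_mean]
    _ < ∑ j, d j * log (d j) :=
        sum_mul_log_lt_sum_mul_log hd_nonneg (truncGeom_pos hl) (by rw [hd_sum, sum_truncGeom hl])
          hne

/-- For `k ≥ 1`, `0 < m < k`, and `λ > 0` the unique positive real with mean `φ(λ) = m`,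
the truncated geometric distribution `d_λ` is the unique entropy maximizer over `Δ^k_m`:
every other `d ∈ Δ^k_m` has strictly smaller entropy. -/
theorem truncGeom_unique_entropy_max (k : ℕ) (hk : 1 ≤ k) (m : ℝ)
    (hm0 : 0 < m) (hmk : m < k) (l : ℝ) (hl : 0 < l)
    (hmean : (∑ j ∈ Finset.range (k + 1), (j : ℝ) * l ^ j) /
      (∑ j ∈ Finset.range (k + 1), l ^ j) = m) :
    ∀ d ∈ DeltaKM k m, d ≠ truncGeom k l → entropy d < entropy (truncGeom k l) :=
  truncGeom_unique_entropy_max_general k m l hl hmean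
end

section
/- Fix k ∈ ℕ with k ≥ 1 and a rational m with 0 < m < k, and let d* be the unique entropy-maximizing distribution in Δ^k_m. For every ε > 0 there exists N such that for all n ≥ N with m·n ∈ ℕ: among the states s ∈ {0,…,k}^{{1,…,n}} with ∑_{i=1}^n s(i) = m·n, the fraction of states whose empirical distribution d^s (where d^s(j) = |{i : s(i) = j}|/n) satisfies ∑_{j=0}^k (d^s(j) - d*(j))² ≥ ε is less than ε. (This is the concentration phenomenon around the maximum-entropy distribution underlying Theorem 1.) -/
/-!
Method of types. The states sharing a count vector `c` number at most `exp (n H(c/n))` (under the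
product measure with marginal `c/n` each of them has probability `exp (-n H(c/n))`) and at least
`exp (n H(c/n)) / (e n)^(k+1)` (by Stirling), while there are at most `(n+1)^(k+1)` count vectors.
By compactness of `Δ^k_m` and uniqueness of the maximiser, every empirical distribution at squared
distance `≥ ε` from `d*` has entropy `≤ H(d*) - δ`, which bounds the bad states by
`(n+1)^(k+1) exp (n (H(d*) - δ))`. Rounding `n d*` to a count vector with `n` agents and total
money `M` gives a state whose empirical entropy exceeds `H(d*) - δ/2`, so there are at least
`exp (n (H(d*) - δ/2)) / (e n)^(k+1)` states, and the factor `exp (-δ n / 2)` beats the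
polynomials.
-/

open Finset Real Filter Topology
open scoped Nat

/-- The empirical distribution of money in a state `s : {1,…,n} → {0,…,k}`:
`d^s(j) = |{i : s(i) = j}|/n`. -/
noncomputable def empDist {k n : ℕ} (s : Fin n → Fin (k + 1)) : Fin (k + 1) → ℝ :=
  fun j => ((Finset.univ.filter (fun i => s i = j)).card : ℝ) / n

section Counts

variable {ι κ α : Type*} [Fintype ι] [DecidableEq α]

def counts (s : ι → α) (a : α) : ℕ := #{i | s i = a}

lemma counts_le_card (s : ι → α) (a : α) : counts s a ≤ Fintype.card ι :=
  card_filter_le _ _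

lemma counts_comp_equiv [Fintype κ] (s : ι → α) (e : κ ≃ ι) :
    counts (s ∘ e) = counts s :=
  funext fun a => card_equiv e (by simp)

variable [Fintype α]

lemma sum_counts (s : ι → α) : ∑ a, counts s a = Fintype.card ι :=
  (card_eq_sum_card_fiberwise fun i _ => mem_univ (s i)).symm

@[to_additive]
lemma prod_comp_eq_prod_pow_counts {M : Type*} [CommMonoid M] (s : ι → α) (p : α → M) :
    ∏ i, p (s i) = ∏ a, p a ^ counts s a := by
  rw [← prod_fiberwise univ s]
  refine prod_congr rfl fun a _ => ?_
  rw [prod_congr rfl fun i hi => by rw [(mem_filter.1 hi).2], prod_const]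
  rfl

lemma exists_counts_eq (c : α → ℕ) (hc : ∑ a, c a = Fintype.card ι) :
    ∃ s : ι → α, counts s = c := by
  let e : ι ≃ Σ a, Fin (c a) := Fintype.equivOfCardEq (by simp [hc])
  refine ⟨Sigma.fst ∘ e, ?_⟩
  rw [counts_comp_equiv]
  funext a
  rw [counts, ← Fintype.card_subtype, Fintype.card_congr (Equiv.sigmaSubtype a), Fintype.card_fin]

lemma card_image_counts_le (B : Finset (ι → α)) :
    #(B.image counts) ≤ (Fintype.card ι + 1) ^ Fintype.card α := by
  classical
  calc #(B.image counts) ≤ #(Fintype.piFinset fun _ : α => range (Fintype.card ι + 1)) := by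
        refine card_le_card fun c hc => ?_
        obtain ⟨s, -, rfl⟩ := mem_image.1 hc
        simpa [Nat.lt_succ_iff] using counts_le_card s
    _ = _ := by simp

variable [DecidableEq ι]

lemma card_counts_eq_mul_prod_pow_le_one (c : α → ℕ) (p : α → ℝ) (hp : ∀ a, 0 ≤ p a)
    (hp1 : ∑ a, p a = 1) : #{s : ι → α | counts s = c} * ∏ a, p a ^ c a ≤ 1 := by
  calc #{s : ι → α | counts s = c} * ∏ a, p a ^ c a
      = ∑ s ∈ {s : ι → α | counts s = c}, ∏ i, p (s i) := by
        rw [sum_congr rfl fun s hs => by rw [prod_comp_eq_prod_pow_counts, (mem_filter.1 hs).2],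
          sum_const, nsmul_eq_mul]
    _ ≤ ∑ s : ι → α, ∏ i, p (s i) :=
        sum_le_sum_of_subset_of_nonneg (subset_univ _) fun s _ _ => prod_nonneg fun i _ => hp _
    _ = 1 := by rw [← Fintype.prod_sum (fun _ a => p a), hp1, prod_const_one]

lemma factorial_le_prod_factorial_mul_card_counts_eq (s : ι → α) :
    (Fintype.card ι)! ≤ (∏ a, (counts s a)!) * #{t : ι → α | counts t = counts s} := by
  -- the fibres of `g ↦ s ∘ g` are cosets of the stabiliser of `s`, which has order
  -- `∏ a, (counts s a)!`
  have hfiber : ∀ t ∈ univ.image fun g : Equiv.Perm ι => s ∘ g,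
      #{g : Equiv.Perm ι | s ∘ g = t} ≤ ∏ a, (counts s a)! := by
    intro t ht
    obtain ⟨g₀, -, rfl⟩ := mem_image.1 ht
    rw [← Fintype.card_subtype]
    refine le_of_eq ?_
    calc Fintype.card {g : Equiv.Perm ι // s ∘ g = s ∘ g₀}
        = Fintype.card {g : Equiv.Perm ι // s ∘ g = s} :=
          Fintype.card_congr <| (Equiv.mulRight g₀⁻¹).subtypeEquiv fun g => by
            constructor <;> intro h <;> funext i
            · simpa using congrFun h (g₀⁻¹ i)
            · simpa using congrFun h (g₀ i)
      _ = ∏ a, (counts s a)! := by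
          rw [DomMulAct.stabilizer_card]
          simp [counts, Fintype.card_subtype]
  calc (Fintype.card ι)! = #(univ : Finset (Equiv.Perm ι)) := by simp [Fintype.card_perm]
    _ ≤ (∏ a, (counts s a)!) * #(univ.image fun g : Equiv.Perm ι => s ∘ g) :=
        card_le_mul_card_image _ _ hfiber
    _ ≤ _ := by
        refine Nat.mul_le_mul_left _ (card_le_card fun t ht => ?_)
        obtain ⟨g, -, rfl⟩ := mem_image.1 ht
        simp [counts_comp_equiv]

end Counts

section Entropy

variable {k n : ℕ}

lemma entropy_eq_sum_negMulLog (d : Fin (k + 1) → ℝ) : entropy d = ∑ j, negMulLog (d j) := by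
  rw [entropy, ← sum_neg_distrib, sum_filter]
  refine sum_congr rfl fun j _ => ?_
  split_ifs with h <;> simp_all [negMulLog]

lemma continuous_entropy : Continuous (entropy (k := k)) := by
  simp_rw [funext entropy_eq_sum_negMulLog]
  fun_prop

lemma isCompact_DeltaKM (m : ℝ) : IsCompact (DeltaKM k m) := by
  refine (isCompact_Icc (a := 0) (b := 1)).of_isClosed_subset ?_ fun d ⟨hd0, hd1, _⟩ =>
    ⟨hd0, fun j => (single_le_sum (fun j _ => hd0 j) (mem_univ j)).trans_eq hd1⟩
  simp only [DeltaKM, Set.ofPred_and, Set.ofPred_forall]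
  refine (isClosed_iInter fun j => isClosed_le ?_ ?_).inter
    ((isClosed_eq ?_ ?_).inter (isClosed_eq ?_ ?_)) <;> fun_prop

lemma sum_empDist (hn : n ≠ 0) (s : Fin n → Fin (k + 1)) : ∑ j, empDist s j = 1 := by
  simp only [empDist, ← sum_div]
  rw [div_eq_one_iff_eq (by exact_mod_cast hn)]
  exact_mod_cast (sum_counts s).trans (Fintype.card_fin n)

lemma sum_mul_empDist (s : Fin n → Fin (k + 1)) :
    ∑ j : Fin (k + 1), ((j : ℕ) : ℝ) * empDist s j =
      ((∑ i, (s i : ℕ) : ℕ) : ℝ) / n := by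
  simp only [empDist, mul_div_assoc', ← sum_div, sum_comp_eq_sum_nsmul_counts s, smul_eq_mul]
  push_cast
  simp only [counts, mul_comm]

lemma empDist_mem_DeltaKM (hn : n ≠ 0) {m : ℝ} {s : Fin n → Fin (k + 1)}
    (hs : ((∑ i, (s i : ℕ) : ℕ) : ℝ) = m * n) : empDist s ∈ DeltaKM k m := by
  refine ⟨fun j => by unfold empDist; positivity, sum_empDist hn s, ?_⟩
  rw [sum_mul_empDist, hs, mul_div_cancel_right₀ _ (by exact_mod_cast hn)]

lemma prod_empDist_pow_counts (s : Fin n → Fin (k + 1)) :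
    ∏ j, empDist s j ^ counts s j = exp (-(n * entropy (empDist s))) := by
  rw [entropy_eq_sum_negMulLog, mul_sum, ← sum_neg_distrib, exp_sum]
  refine prod_congr rfl fun j _ => ?_
  have hp : empDist s j = counts s j / n := rfl
  rcases Nat.eq_zero_or_pos (counts s j) with h | h
  · simp [hp, h]
  · have hn : 0 < n := h.trans_le ((counts_le_card s j).trans_eq (Fintype.card_fin n))
    have hpos : 0 < empDist s j := by rw [hp]; positivity
    rw [negMulLog, ← exp_log (pow_pos hpos _), log_pow, hp]
    field_simp

end Entropy

section TypeClass

variable {k n : ℕ}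

lemma card_counts_eq_le_exp_entropy (hn : n ≠ 0) (s : Fin n → Fin (k + 1)) :
    (#{t : Fin n → Fin (k + 1) | counts t = counts s} : ℝ) ≤
      exp (n * entropy (empDist s)) := by
  have h := card_counts_eq_mul_prod_pow_le_one (ι := Fin n) (counts s) (empDist s)
    (fun j => by unfold empDist; positivity) (sum_empDist hn s)
  rwa [prod_empDist_pow_counts, exp_neg, ← div_eq_mul_inv, div_le_one (exp_pos _)] at h

lemma factorial_le_exp_one_mul_sqrt_mul_pow {c : ℕ} (hc : c ≠ 0) :
    (c ! : ℝ) ≤ exp 1 * √c * (c / exp 1) ^ c := by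
  -- `stirlingSeq` decreases from `stirlingSeq 1 = e / √2`
  have h := Stirling.stirlingSeq'_antitone (Nat.zero_le (c - 1))
  simp only [Function.comp, Nat.succ_eq_add_one, zero_add, Nat.sub_add_cancel
    (Nat.pos_of_ne_zero hc), Stirling.stirlingSeq_one] at h
  rw [Stirling.stirlingSeq, div_le_iff₀ (by positivity)] at h
  calc (c ! : ℝ) ≤ exp 1 / √2 * (√(2 * c) * (c / exp 1) ^ c) := h
    _ = exp 1 * √c * (c / exp 1) ^ c := by
      rw [sqrt_mul zero_le_two]
      field_simp

lemma factorial_le_exp_one_mul_mul_pow {c : ℕ} (hn : n ≠ 0) (hcn : c ≤ n) :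
    (c ! : ℝ) ≤ exp 1 * n * (c / exp 1) ^ c := by
  have hn1 : (1 : ℝ) ≤ n := by exact_mod_cast Nat.one_le_iff_ne_zero.2 hn
  rcases eq_or_ne c 0 with rfl | hc
  · simpa using one_le_mul_of_one_le_of_one_le (one_le_exp zero_le_one) hn1
  · refine (factorial_le_exp_one_mul_sqrt_mul_pow hc).trans ?_
    gcongr
    calc √(c : ℝ) ≤ c :=
          sqrt_le_self_iff.2 (Or.inr (by exact_mod_cast Nat.one_le_iff_ne_zero.2 hc))
      _ ≤ n := by exact_mod_cast hcn

lemma div_exp_one_pow_le_factorial (n : ℕ) : ((n : ℝ) / exp 1) ^ n ≤ n ! := by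
  have h := Real.pow_div_factorial_le_exp _ (Nat.cast_nonneg n) n
  rw [div_le_iff₀ (by positivity)] at h
  rw [div_pow, exp_one_pow, div_le_iff₀ (exp_pos _)]
  linarith

lemma exp_entropy_le_card_counts_eq (hn : n ≠ 0) (s : Fin n → Fin (k + 1)) :
    exp (n * entropy (empDist s)) ≤
      (exp 1 * n) ^ (k + 1) * #{t : Fin n → Fin (k + 1) | counts t = counts s} := by
  set T : ℝ := ((#{t : Fin n → Fin (k + 1) | counts t = counts s} : ℕ) : ℝ)
  set F : ℝ := ∏ j, ((counts s j)! : ℝ)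
  set H := entropy (empDist s)
  have hn' : (n : ℝ) ≠ 0 := by exact_mod_cast hn
  have hcounts : ∀ j, (counts s j : ℝ) / exp 1 = n / exp 1 * empDist s j := fun j => by
    simp only [empDist, counts]; field_simp
  have hF : F ≤ (exp 1 * n) ^ (k + 1) * ((n / exp 1) ^ n * exp (-(n * H))) :=
    calc F ≤ ∏ j, (exp 1 * n * ((n / exp 1) ^ counts s j * empDist s j ^ counts s j)) :=
          prod_le_prod (fun j _ => by positivity) fun j _ =>
            (factorial_le_exp_one_mul_mul_pow hn
              ((counts_le_card s j).trans_eq (Fintype.card_fin n))).trans_eq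
              (by rw [hcounts, mul_pow])
      _ = _ := by
          rw [prod_mul_distrib, prod_const, card_univ, Fintype.card_fin, prod_mul_distrib,
            prod_pow_eq_pow_sum, sum_counts, Fintype.card_fin, prod_empDist_pow_counts]
  have hFT : (n ! : ℝ) ≤ F * T := by
    have h := factorial_le_prod_factorial_mul_card_counts_eq s
    rw [Fintype.card_fin] at h
    simp only [F, T]
    exact_mod_cast h
  have hmain : exp (n * H) * F ≤ (exp 1 * n) ^ (k + 1) * T * F :=
    calc exp (n * H) * F
        ≤ exp (n * H) * ((exp 1 * n) ^ (k + 1) * ((n / exp 1) ^ n * exp (-(n * H)))) := by gcongr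
      _ = (exp 1 * n) ^ (k + 1) * (n / exp 1) ^ n := by rw [exp_neg]; field_simp
      _ ≤ (exp 1 * n) ^ (k + 1) * (F * T) := by
          gcongr; exact (div_exp_one_pow_le_factorial n).trans hFT
      _ = (exp 1 * n) ^ (k + 1) * T * F := by ring
  exact le_of_mul_le_mul_right hmain (prod_pos fun j _ => by positivity)

end TypeClass

section Rounding

variable {k n : ℕ}

lemma exists_sum_eq_sum_mul_eq {r t : ℕ} (h : t ≤ k * r) :
    ∃ e : Fin (k + 1) → ℕ, ∑ j, e j = r ∧ ∑ j : Fin (k + 1), (j : ℕ) * e j = t := by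
  induction r generalizing t with
  | zero => exact ⟨0, by simp, by simp_all⟩
  | succ r ih =>
    obtain ⟨e, he, het⟩ := ih (t := t - min t k) (by rw [Nat.mul_succ] at h; omega)
    refine ⟨e + Pi.single ⟨min t k, by omega⟩ 1, ?_, ?_⟩
    · simp [sum_add_distrib, he]
    · simp [sum_add_distrib, het, mul_add, Pi.single_apply]

lemma exists_counts_near {x : Fin (k + 1) → ℝ} (hx : ∀ j, 0 ≤ x j) {M : ℕ}
    (hn : ∑ j, x j = n) (hM : ∑ j : Fin (k + 1), ((j : ℕ) : ℝ) * x j = M) :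
    ∃ c : Fin (k + 1) → ℕ, ∑ j, c j = n ∧ ∑ j : Fin (k + 1), (j : ℕ) * c j = M ∧
      ∀ j, |c j - x j| ≤ k + 1 := by
  set f : Fin (k + 1) → ℕ := fun j => ⌊x j⌋₊
  have hf : ∀ j, (f j : ℝ) ≤ x j := fun j => Nat.floor_le (hx j)
  have hf' : ∀ j, x j < f j + 1 := fun j => Nat.lt_floor_add_one _
  -- the fractional parts `x j - f j ∈ [0, 1)` make up `r ≤ k` agents carrying money `t ≤ k r`
  obtain ⟨r, hr⟩ : ∃ r, n = ∑ j, f j + r := Nat.exists_eq_add_of_le <| by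
    have : ∑ j, (f j : ℝ) ≤ n := hn ▸ sum_le_sum fun j _ => hf j
    exact_mod_cast this
  obtain ⟨t, ht⟩ : ∃ t, M = ∑ j : Fin (k + 1), (j : ℕ) * f j + t :=
      Nat.exists_eq_add_of_le <| by
    have : ∑ j : Fin (k + 1), ((j : ℕ) : ℝ) * f j ≤ M :=
      hM ▸ sum_le_sum fun j _ => mul_le_mul_of_nonneg_left (hf j) (Nat.cast_nonneg _)
    exact_mod_cast this
  have hr' : (r : ℝ) = ∑ j, (x j - f j) := by
    rw [sum_sub_distrib, hn, hr]; push_cast; ring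
  have ht' : (t : ℝ) = ∑ j : Fin (k + 1), ((j : ℕ) : ℝ) * (x j - f j) := by
    simp_rw [mul_sub]; rw [sum_sub_distrib, hM, ht]; push_cast; ring
  have htr : t ≤ k * r := by
    have : (t : ℝ) ≤ k * r := by
      rw [ht', hr', mul_sum]
      refine sum_le_sum fun j _ => mul_le_mul_of_nonneg_right ?_ (sub_nonneg.2 (hf j))
      exact_mod_cast Nat.lt_succ_iff.1 j.isLt
    exact_mod_cast this
  have hrk : r ≤ k := by
    have : (r : ℝ) < k + 1 := by
      rw [hr']
      calc ∑ j, (x j - f j) < ∑ _j : Fin (k + 1), (1 : ℝ) :=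
            sum_lt_sum_of_nonempty univ_nonempty fun j _ => by linarith [hf' j]
        _ = k + 1 := by simp
    exact_mod_cast Nat.lt_succ_iff.1 (by exact_mod_cast this)
  obtain ⟨e, he, het⟩ := exists_sum_eq_sum_mul_eq htr
  refine ⟨f + e, by simp [sum_add_distrib, he, hr], by simp [sum_add_distrib, mul_add, het, ht],
    fun j => abs_le.2 ⟨?_, ?_⟩⟩
  · push_cast [Pi.add_apply]
    linarith [hf' j, (e j).cast_nonneg (α := ℝ), k.cast_nonneg (α := ℝ)]
  · have hej : (e j : ℝ) ≤ k := by
      exact_mod_cast (he ▸ single_le_sum (fun j _ => Nat.zero_le (e j)) (mem_univ j)).trans hrk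
    push_cast [Pi.add_apply]
    linarith [hf j]

lemma exists_state_near {m : ℝ} {d : Fin (k + 1) → ℝ} (hd : d ∈ DeltaKM k m) (hn : n ≠ 0)
    {M : ℕ} (hM : (M : ℝ) = m * n) :
    ∃ s : Fin n → Fin (k + 1), ∑ i, (s i : ℕ) = M ∧
      dist (empDist s) d ≤ (k + 1) / n := by
  obtain ⟨hd0, hd1, hdm⟩ := hd
  obtain ⟨c, hcn, hcM, hc⟩ := exists_counts_near (x := fun j => n * d j)
    (fun j => mul_nonneg n.cast_nonneg (hd0 j)) (by rw [← mul_sum, hd1, mul_one])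
    (by rw [hM, ← hdm, sum_mul]; exact sum_congr rfl fun j _ => by ring)
  obtain ⟨s, hs⟩ := exists_counts_eq (ι := Fin n) c (by simp [hcn])
  have hn' : (0 : ℝ) < n := by positivity
  refine ⟨s, ?_, (dist_pi_le_iff (by positivity)).2 fun j => ?_⟩
  · rw [sum_comp_eq_sum_nsmul_counts s (fun j => (j : ℕ)), hs, ← hcM]
    simp [mul_comm]
  · rw [dist_eq, show empDist s j = c j / n by rw [← hs]; rfl, div_sub' hn'.ne', abs_div,
      abs_of_pos hn']
    exact div_le_div_of_nonneg_right (hc j) hn'.le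

end Rounding

section Concentration

variable {k n : ℕ}

lemma card_le_of_entropy_le (hn : n ≠ 0) {B : Finset (Fin n → Fin (k + 1))} {h : ℝ}
    (hB : ∀ s ∈ B, entropy (empDist s) ≤ h) :
    (#B : ℝ) ≤ (n + 1) ^ (k + 1) * exp (n * h) := by
  have hfiber : ∀ c ∈ B.image counts, (#{s ∈ B | counts s = c} : ℝ) ≤ exp (n * h) := by
    intro c hc
    obtain ⟨s, hs, rfl⟩ := mem_image.1 hc
    calc (#{t ∈ B | counts t = counts s} : ℝ)
        ≤ #{t : Fin n → Fin (k + 1) | counts t = counts s} := by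
          exact_mod_cast card_le_card (filter_subset_filter _ (subset_univ B))
      _ ≤ exp (n * entropy (empDist s)) := card_counts_eq_le_exp_entropy hn s
      _ ≤ exp (n * h) := by gcongr; exact hB s hs
  have himage : (#(B.image counts) : ℝ) ≤ (n + 1) ^ (k + 1) := by
    simpa using (Nat.cast_le (α := ℝ)).2 (card_image_counts_le B)
  calc (#B : ℝ) = ∑ c ∈ B.image counts, (#{s ∈ B | counts s = c} : ℝ) := by
        exact_mod_cast card_eq_sum_card_image counts B
    _ ≤ #(B.image counts) * exp (n * h) := by simpa using sum_le_card_nsmul _ _ _ hfiber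
    _ ≤ (n + 1) ^ (k + 1) * exp (n * h) := by gcongr

lemma exp_entropy_le_card_states (hn : n ≠ 0) {M : ℕ} {s : Fin n → Fin (k + 1)}
    (hs : ∑ i, (s i : ℕ) = M) :
    exp (n * entropy (empDist s)) ≤
      (exp 1 * n) ^ (k + 1) * #{t : Fin n → Fin (k + 1) | ∑ i, (t i : ℕ) = M} := by
  have hsub : ({t | counts t = counts s} : Finset (Fin n → Fin (k + 1))) ⊆
      ({t | ∑ i, (t i : ℕ) = M} : Finset (Fin n → Fin (k + 1))) := fun t ht => by
    simp only [mem_filter, mem_univ, true_and] at ht ⊢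
    rw [← hs, sum_comp_eq_sum_nsmul_counts t (fun j => (j : ℕ)),
      sum_comp_eq_sum_nsmul_counts s (fun j => (j : ℕ)), ht]
  refine (exp_entropy_le_card_counts_eq hn s).trans ?_
  gcongr

lemma card_filter_lt_mul_card (hn : n ≠ 0) {S : Finset (Fin n → Fin (k + 1))}
    {p : (Fin n → Fin (k + 1)) → Prop} [DecidablePred p] {h δ ε : ℝ}
    (hS : exp (n * (h - δ / 2)) ≤ (exp 1 * n) ^ (k + 1) * #S)
    (hfar : ∀ s ∈ S, p s → entropy (empDist s) ≤ h - δ)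
    (hsmall : ((n : ℝ) + 1) ^ (k + 1) * (exp 1 * n) ^ (k + 1) * exp (-(δ / 2 * n)) < ε) :
    #(S.filter p) < ε * #S := by
  have hB : (#(S.filter p) : ℝ) ≤ (n + 1) ^ (k + 1) * exp (n * (h - δ)) :=
    card_le_of_entropy_le hn fun s hs => hfar s (mem_filter.1 hs).1 (mem_filter.1 hs).2
  have hL : 0 < (exp 1 * n) ^ (k + 1) := by positivity
  have hε : 0 < ε := lt_of_le_of_lt (by positivity) hsmall
  have hsplit : exp (n * (h - δ)) = exp (-(δ / 2 * n)) * exp (n * (h - δ / 2)) := by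
    rw [← exp_add]; ring_nf
  refine lt_of_mul_lt_mul_right ?_ hL.le
  calc (#(S.filter p) : ℝ) * (exp 1 * n) ^ (k + 1)
      ≤ (n + 1) ^ (k + 1) * exp (n * (h - δ)) * (exp 1 * n) ^ (k + 1) := by gcongr
    _ = ((n + 1) ^ (k + 1) * (exp 1 * n) ^ (k + 1) * exp (-(δ / 2 * n))) *
          exp (n * (h - δ / 2)) := by rw [hsplit]; ring
    _ < ε * exp (n * (h - δ / 2)) := by gcongr
    _ ≤ ε * ((exp 1 * n) ^ (k + 1) * #S) := mul_le_mul_of_nonneg_left hS hε.le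
    _ = ε * #S * (exp 1 * n) ^ (k + 1) := by ring

lemma IsCompact.exists_forall_le_sub_of_forall_lt {X : Type*} [TopologicalSpace X] {K : Set X}
    (hK : IsCompact K) {f : X → ℝ} (hf : ContinuousOn f K) {y : ℝ}
    (hlt : ∀ x ∈ K, f x < y) :
    ∃ δ > 0, ∀ x ∈ K, f x ≤ y - δ := by
  rcases K.eq_empty_or_nonempty with rfl | hne
  · exact ⟨1, one_pos, by simp⟩
  obtain ⟨x₀, hx₀, hmax⟩ := hK.exists_isMaxOn hne hf
  exact ⟨y - f x₀, sub_pos.2 (hlt x₀ hx₀), fun x hx => by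
    linarith [isMaxOn_iff.1 hmax x hx]⟩

lemma exists_entropy_le_sub_of_le_dist {m : ℝ} {dstar : Fin (k + 1) → ℝ}
    (hmax : ∀ d ∈ DeltaKM k m, d ≠ dstar → entropy d < entropy dstar) {ε : ℝ}
    (hε : 0 < ε) :
    ∃ δ > 0, ∀ d ∈ DeltaKM k m, ε ≤ ∑ j, (d j - dstar j) ^ 2 →
      entropy d ≤ entropy dstar - δ := by
  have hK : IsCompact (DeltaKM k m ∩ {d | ε ≤ ∑ j, (d j - dstar j) ^ 2}) :=
    (isCompact_DeltaKM m).inter_right (isClosed_le continuous_const (by fun_prop))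
  obtain ⟨δ, hδ, hgap⟩ := hK.exists_forall_le_sub_of_forall_lt continuous_entropy.continuousOn
    fun d ⟨hd, hfar⟩ => hmax d hd (by rintro rfl; simp at hfar; linarith)
  exact ⟨δ, hδ, fun d hd hfar => hgap d ⟨hd, hfar⟩⟩

lemma eventually_pow_mul_pow_mul_exp_neg_lt (a : ℕ) {b ε : ℝ} (hb : 0 < b) (hε : 0 < ε) :
    ∀ᶠ n : ℕ in atTop, ((n : ℝ) + 1) ^ a * (exp 1 * n) ^ a * exp (-(b * n)) < ε := by
  have hr : |exp (-b)| < 1 := by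
    rw [abs_of_pos (exp_pos _)]; exact exp_lt_one_iff.2 (neg_neg_of_pos hb)
  have hlim :=
    (tendsto_pow_const_mul_const_pow_of_abs_lt_one (2 * a) hr).const_mul ((2 * exp 1) ^ a)
  rw [mul_zero] at hlim
  filter_upwards [hlim.eventually (gt_mem_nhds hε), eventually_ge_atTop 1] with n hlt hn
  refine lt_of_le_of_lt ?_ hlt
  have hn' : (1 : ℝ) ≤ n := by exact_mod_cast hn
  calc ((n : ℝ) + 1) ^ a * (exp 1 * n) ^ a * exp (-(b * n))
      ≤ (2 * n) ^ a * (exp 1 * n) ^ a * exp (-(b * n)) := by gcongr; linarith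
    _ = (2 * exp 1) ^ a * ((n : ℝ) ^ (2 * a) * exp (-b) ^ n) := by
      rw [← exp_nat_mul, show (n : ℝ) * -b = -(b * n) by ring]
      ring

end Concentration

theorem concentration_max_entropy_general (k : ℕ) (m : ℚ) (dstar : Fin (k + 1) → ℝ)
    (hdstar : dstar ∈ DeltaKM k (m : ℝ))
    (hmax : ∀ d ∈ DeltaKM k (m : ℝ), d ≠ dstar → entropy d < entropy dstar) :
    ∀ ε : ℝ, 0 < ε → ∃ N : ℕ, ∀ n : ℕ, N ≤ n → ∀ M : ℕ, (M : ℚ) = m * n →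
      (((Finset.univ.filter (fun s : Fin n → Fin (k + 1) => ∑ i, (s i : ℕ) = M)).filter
          (fun s => ε ≤ ∑ j, (empDist s j - dstar j) ^ 2)).card : ℝ) <
        ε * ((Finset.univ.filter
          (fun s : Fin n → Fin (k + 1) => ∑ i, (s i : ℕ) = M)).card : ℝ) := by
  intro ε hε
  obtain ⟨δ, hδ, hfar⟩ := exists_entropy_le_sub_of_le_dist hmax hε
  obtain ⟨η, hη, hnear⟩ := Metric.eventually_nhds_iff.1 <|
    (continuous_entropy.tendsto dstar).eventually_const_lt (sub_lt_self _ (half_pos hδ))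
  obtain ⟨N, hN⟩ := eventually_atTop.1 <|
    (eventually_pow_mul_pow_mul_exp_neg_lt (k + 1) (half_pos hδ) hε).and <|
      ((tendsto_const_div_atTop_nhds_zero_nat ((k : ℝ) + 1)).eventually (gt_mem_nhds hη)).and
        (eventually_ne_atTop 0)
  refine ⟨N, fun n hn M hM => ?_⟩
  obtain ⟨hsmall, hfine, hn0⟩ := hN n hn
  have hMn : (M : ℝ) = m * n := by exact_mod_cast hM
  obtain ⟨s₀, hs₀, hs₀near⟩ := exists_state_near hdstar hn0 hMn
  refine card_filter_lt_mul_card hn0 ?_ (fun s hs hsfar => hfar _ ?_ hsfar) hsmall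
  · refine (exp_entropy_le_card_states hn0 hs₀).trans' (exp_le_exp.2 ?_)
    gcongr
    exact (hnear (hs₀near.trans_lt hfine)).le
  · exact empDist_mem_DeltaKM hn0 (by rw [(mem_filter.1 hs).2, hMn])

/-- Concentration around the maximum-entropy distribution (underlying Theorem 1):
for `k ≥ 1`, `0 < m < k` rational, and `d*` the unique entropy maximizer in `Δ^k_m`,
for every `ε > 0` there is `N` such that for all `n ≥ N` with `m·n ∈ ℕ` (say `m·n = M`),
among the states `s : {1,…,n} → {0,…,k}` with total money `∑ᵢ s(i) = M`, the fraction of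
states whose empirical distribution is at squared Euclidean distance `≥ ε` from `d*`
is less than `ε`. -/
theorem concentration_max_entropy (k : ℕ) (hk : 1 ≤ k) (m : ℚ)
    (hm0 : 0 < m) (hmk : (m : ℝ) < k) (dstar : Fin (k + 1) → ℝ)
    (hdstar : dstar ∈ DeltaKM k (m : ℝ))
    (hmax : ∀ d ∈ DeltaKM k (m : ℝ), d ≠ dstar → entropy d < entropy dstar) :
    ∀ ε : ℝ, 0 < ε → ∃ N : ℕ, ∀ n : ℕ, N ≤ n → ∀ M : ℕ, (M : ℚ) = m * n →
      (((Finset.univ.filter (fun s : Fin n → Fin (k + 1) => ∑ i, (s i : ℕ) = M)).filter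
          (fun s => ε ≤ ∑ j, (empDist s j - dstar j) ^ 2)).card : ℝ) <
        ε * ((Finset.univ.filter
          (fun s : Fin n → Fin (k + 1) => ∑ i, (s i : ℕ) = M)).card : ℝ) :=
  concentration_max_entropy_general k m dstar hdstar hmax
end

section
/- Let n, k ∈ ℕ with k ≥ 1, and let s, t : {1,…,n} → {0,…,k} with i ≠ j such that s(i) < k, s(j) > 0, t(i) = s(i)+1, t(j) = s(j)-1, and t(l) = s(l) for all l ∉ {i,j}. For a state u define W(u) = |{l : u(l) ≠ k}|, and define I(u,x) = 0 if u(x) = k and 1 otherwise. Then W(s) - I(s,j) = W(t) - I(t,i). Consequently, for any β ∈ (0,1), the transition probability expression (1/n)·(1-(1-β)^{W(s)-I(s,j)})·(1/(W(s)-I(s,j))) for the move s → t (where j spends a dollar and i earns it) equals the corresponding expression (1/n)·(1-(1-β)^{W(t)-I(t,i)})·(1/(W(t)-I(t,i))) for the reverse move t → s; i.e., the Markov chain on states has a symmetric transition matrix. -/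
/-- `W(u)`: the number of agents holding fewer than `k` dollars in state `u`
(agents with `k` dollars are unwilling to work under threshold strategy `S_k`). -/
def numWilling {n : ℕ} (k : ℕ) (u : Fin n → ℕ) : ℕ :=
  (Finset.univ.filter (fun l => u l ≠ k)).card

/-- `I(u,x)`: `0` if agent `x` has `k` dollars in state `u`, and `1` otherwise
(the correction for the fact that `x` cannot satisfy his own request). -/
def selfCorrection {n : ℕ} (k : ℕ) (u : Fin n → ℕ) (x : Fin n) : ℕ :=
  if u x = k then 0 else 1

lemma numWilling_eq_sum {n : ℕ} (k : ℕ) (u : Fin n → ℕ) :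
    numWilling k u = ∑ l, selfCorrection k u l := by
  simp [numWilling, selfCorrection, Finset.card_filter, ite_not]

/-- Symmetry of the scrip-system Markov chain: if `t` is obtained from `s` by transferring a
dollar from agent `j` to agent `i`, then `W(s) - I(s,j) = W(t) - I(t,i)`, and hence the
transition probability `(1/n)·(1-(1-β)^{W(s)-I(s,j)})/(W(s)-I(s,j))` for `s → t` equals the
corresponding expression for the reverse move `t → s`. -/
theorem scrip_transition_symmetric (n k : ℕ) (hk : 1 ≤ k)
    (s t : Fin n → ℕ) (hs : ∀ l, s l ≤ k) (ht : ∀ l, t l ≤ k)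
    (i j : Fin n) (hij : i ≠ j) (hsi : s i < k) (hsj : 0 < s j)
    (hti : t i = s i + 1) (htj : t j = s j - 1)
    (hother : ∀ l, l ≠ i → l ≠ j → t l = s l)
    (β : ℝ) (hβ0 : 0 < β) (hβ1 : β < 1) :
    numWilling k s - selfCorrection k s j = numWilling k t - selfCorrection k t i ∧
    (1 / (n : ℝ)) * (1 - (1 - β) ^ (numWilling k s - selfCorrection k s j)) *
        (1 / ((numWilling k s - selfCorrection k s j : ℕ) : ℝ)) =
      (1 / (n : ℝ)) * (1 - (1 - β) ^ (numWilling k t - selfCorrection k t i)) *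
        (1 / ((numWilling k t - selfCorrection k t i : ℕ) : ℝ)) := by
  have hsci : selfCorrection k s i = 1 := by
    simp [selfCorrection, Nat.ne_of_lt hsi]
  have htjk : t j < k := by
    have := hs j; omega
  have hsctj : selfCorrection k t j = 1 := by
    simp [selfCorrection, Nat.ne_of_lt htjk]
  have hjmem : j ∈ (Finset.univ : Finset (Fin n)) \ {i} := by
    simp [hij.symm]
  have hsplit : ∀ u : Fin n → ℕ, ∑ l, selfCorrection k u l =
      (∑ l ∈ ((Finset.univ : Finset (Fin n)) \ {i}) \ {j}, selfCorrection k u l)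
        + selfCorrection k u j + selfCorrection k u i := by
    intro u
    rw [Finset.sum_eq_sum_sdiff_singleton_add (Finset.mem_univ i),
      Finset.sum_eq_sum_sdiff_singleton_add hjmem]
  have hrest : (∑ l ∈ ((Finset.univ : Finset (Fin n)) \ {i}) \ {j}, selfCorrection k t l)
      = ∑ l ∈ ((Finset.univ : Finset (Fin n)) \ {i}) \ {j}, selfCorrection k s l := by
    apply Finset.sum_congr rfl
    intro l hl
    simp only [Finset.mem_sdiff, Finset.mem_singleton] at hl
    rw [selfCorrection, selfCorrection, hother l hl.1.2 hl.2]
  have key : numWilling k t + selfCorrection k s j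
      = numWilling k s + selfCorrection k t i := by
    rw [numWilling_eq_sum, numWilling_eq_sum, hsplit, hsplit, hrest, hsctj, hsci]
    ring
  have hWs : 1 ≤ numWilling k s := by
    have : i ∈ Finset.univ.filter (fun l => s l ≠ k) := by
      simp [Nat.ne_of_lt hsi]
    exact Finset.card_pos.mpr ⟨i, this⟩
  have hWt : 1 ≤ numWilling k t := by
    have : j ∈ Finset.univ.filter (fun l => t l ≠ k) := by
      simp [Nat.ne_of_lt htjk]
    exact Finset.card_pos.mpr ⟨j, this⟩
  have hscj : selfCorrection k s j ≤ 1 := by unfold selfCorrection; split <;> omega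
  have hscti : selfCorrection k t i ≤ 1 := by unfold selfCorrection; split <;> omega
  have h : numWilling k s - selfCorrection k s j = numWilling k t - selfCorrection k t i := by
    omega
  exact ⟨h, by rw [h]⟩
end

section
/- Let a ≤ b be real numbers and let F be a correspondence assigning to each x ∈ [a,b] a nonempty closed interval F(x) ⊆ [a,b] (i.e., F(x) is nonempty, convex, and compact), such that the graph {(x,y) : x ∈ [a,b], y ∈ F(x)} is a closed subset of ℝ². Then there exists x ∈ [a,b] with x ∈ F(x). -/
/-!
Split `[a, b]` into the points where `F` has a value above the diagonal and those where it has
one below. Both sets are closed, being projections of closed parts of the compact graph; they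
cover `[a, b]` and contain `a` and `b` respectively. By connectedness of `[a, b]` they meet,
and at a common point `x` the interval `F x` contains values on both sides of `x`, hence `x`.
-/

open Set

theorem IsCompact.isClosed_image_fst_inter {X Y : Type*} [TopologicalSpace X] [T2Space X]
    [TopologicalSpace Y] {G C : Set (X × Y)} (hG : IsCompact G) (hC : IsClosed C) :
    IsClosed (Prod.fst '' (G ∩ C)) :=
  ((hG.inter_right hC).image continuous_fst).isClosed

theorem IsCompact.exists_mem_Icc_le_and_ge {α : Type*} [ConditionallyCompleteLinearOrder α]
    [TopologicalSpace α] [OrderTopology α] [DenselyOrdered α] {G : Set (α × α)}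
    (hG : IsCompact G) {a b : α} (hab : a ≤ b) (hdom : ∀ x ∈ Icc a b, ∃ y, (x, y) ∈ G)
    (ha : ∃ y, (a, y) ∈ G ∧ a ≤ y) (hb : ∃ y, (b, y) ∈ G ∧ y ≤ b) :
    ∃ x ∈ Icc a b, (∃ y, (x, y) ∈ G ∧ x ≤ y) ∧ ∃ z, (x, z) ∈ G ∧ z ≤ x := by
  set A := Prod.fst '' (G ∩ {p | p.1 ≤ p.2})
  set B := Prod.fst '' (G ∩ {p | p.2 ≤ p.1})
  have hA : IsClosed A := hG.isClosed_image_fst_inter (isClosed_le continuous_fst continuous_snd)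
  have hB : IsClosed B := hG.isClosed_image_fst_inter (isClosed_le continuous_snd continuous_fst)
  have hcover : Icc a b ⊆ A ∪ B := by
    intro x hx
    obtain ⟨y, hy⟩ := hdom x hx
    rcases le_total x y with hxy | hyx
    · exact Or.inl ⟨(x, y), ⟨hy, hxy⟩, rfl⟩
    · exact Or.inr ⟨(x, y), ⟨hy, hyx⟩, rfl⟩
  obtain ⟨ya, hya, hay⟩ := ha
  obtain ⟨yb, hyb, hyb'⟩ := hb
  have haA : (Icc a b ∩ A).Nonempty := ⟨a, left_mem_Icc.2 hab, (a, ya), ⟨hya, hay⟩, rfl⟩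
  have hbB : (Icc a b ∩ B).Nonempty := ⟨b, right_mem_Icc.2 hab, (b, yb), ⟨hyb, hyb'⟩, rfl⟩
  obtain ⟨x, hx, ⟨⟨_, y⟩, ⟨hy, hxy⟩, rfl⟩, ⟨⟨_, z⟩, ⟨hz, hzx⟩, rfl⟩⟩ :=
    isPreconnected_closed_iff.1 isPreconnected_Icc A B hA hB hcover haA hbB
  exact ⟨_, hx, ⟨y, hy, hxy⟩, z, hz, hzx⟩

theorem interval_correspondence_fixed_point_general (a b : ℝ) (hab : a ≤ b)
    (F : ℝ → Set ℝ)
    (hsub : ∀ x ∈ Set.Icc a b, F x ⊆ Set.Icc a b)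
    (hne : ∀ x ∈ Set.Icc a b, (F x).Nonempty)
    (hconv : ∀ x ∈ Set.Icc a b, Convex ℝ (F x))
    (hgraph : IsClosed {p : ℝ × ℝ | p.1 ∈ Set.Icc a b ∧ p.2 ∈ F p.1}) :
    ∃ x ∈ Set.Icc a b, x ∈ F x := by
  have hG : IsCompact {p : ℝ × ℝ | p.1 ∈ Icc a b ∧ p.2 ∈ F p.1} :=
    (isCompact_Icc.prod isCompact_Icc).of_isClosed_subset hgraph
      fun p hp => ⟨hp.1, hsub _ hp.1 hp.2⟩
  have ha := left_mem_Icc.2 hab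
  have hb := right_mem_Icc.2 hab
  obtain ⟨ya, hya⟩ := hne a ha
  obtain ⟨yb, hyb⟩ := hne b hb
  obtain ⟨x, hx, ⟨y, ⟨-, hy⟩, hxy⟩, z, ⟨-, hz⟩, hzx⟩ := hG.exists_mem_Icc_le_and_ge hab
    (fun x hx => (hne x hx).imp fun _ hy => ⟨hx, hy⟩)
    ⟨ya, ⟨ha, hya⟩, (hsub a ha hya).1⟩ ⟨yb, ⟨hb, hyb⟩, (hsub b hb hyb).2⟩
  exact ⟨x, hx, (hconv x hx).ordConnected.out hz hy ⟨hzx, hxy⟩⟩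

/-- One-dimensional Kakutani fixed-point principle (underlying Theorem 3): a correspondence
`F` on `[a,b]` whose values are nonempty closed subintervals of `[a,b]` (nonempty, convex,
compact) and whose graph is closed has a fixed point `x ∈ F(x)`. -/
theorem interval_correspondence_fixed_point (a b : ℝ) (hab : a ≤ b)
    (F : ℝ → Set ℝ)
    (hsub : ∀ x ∈ Set.Icc a b, F x ⊆ Set.Icc a b)
    (hne : ∀ x ∈ Set.Icc a b, (F x).Nonempty)
    (hconv : ∀ x ∈ Set.Icc a b, Convex ℝ (F x))
    (hcomp : ∀ x ∈ Set.Icc a b, IsCompact (F x))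
    (hgraph : IsClosed {p : ℝ × ℝ | p.1 ∈ Set.Icc a b ∧ p.2 ∈ F p.1}) :
    ∃ x ∈ Set.Icc a b, x ∈ F x :=
  interval_correspondence_fixed_point_general a b hab F hsub hne hconv hgraph
end
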